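/- Let (P, X) be an alternating non-crossing partition of [m'] ∪ [m]. Then ⋂_{n∈ℤ} Σⁿ U_{(P,X)} = D (that is, an arc a satisfies Σⁿ a ∈ U_{(P,X)} for all n ∈ ℤ exactly when both endpoints of a lie in one primed copy) if and only if every block of P is a singleton and x_p ≠ p for every p ∈ [m]. -/
import Mathlib


namespace PY

/-! ### The ∞-gon `Z_{2m}`

Labels are elements of `Fin (2 * m)`, ordered `1' < 1 < 2' < 2 < ⋯ < m' < m`:
the label `2 * i` is the primed (accumulation-point) label `(i+1)'` and the label
`2 * i + 1` is the unprimed label `i + 1`.  A point of `Z_{2m}` is a pair of a label and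
an integer. -/

/-- Points of the ∞-gon `Z_{2m}`: a label and an integer. -/
abbrev Pt (m : ℕ) := Fin (2 * m) × ℤ

/-- Cyclic successor of a label. -/
def cycSucc {n : ℕ} (r : Fin n) : Fin n := ⟨(r.1 + 1) % n, Nat.mod_lt _ r.pos⟩

/-- Cyclic predecessor of a label. -/
def cycPred {n : ℕ} (r : Fin n) : Fin n := ⟨(r.1 + (n - 1)) % n, Nat.mod_lt _ r.pos⟩

/-- Strict lexicographic order on the points of `Z_{2m}`. -/
def ptLt {m : ℕ} (a b : Pt m) : Prop := a.1 < b.1 ∨ (a.1 = b.1 ∧ a.2 < b.2)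

/-- `sort2 a b` is the pair `(a, b)` arranged in (weakly) increasing lexicographic
order; it realizes the notation `|a, b|` for the arc connecting two points. -/
def sort2 {m : ℕ} (a b : Pt m) : Pt m × Pt m :=
  if a.1 < b.1 ∨ (a.1 = b.1 ∧ a.2 ≤ b.2) then (a, b) else (b, a)

/-- An ordered pair of points of `Z_{2m}` is an arc when its endpoints are in increasing
lexicographic order and, if they lie in the same copy of `ℤ`, differ by at least `2`. -/
def IsArc {m : ℕ} (x : Pt m × Pt m) : Prop :=
  ptLt x.1 x.2 ∧ (x.1.1 = x.2.1 → x.1.2 + 2 ≤ x.2.2)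

/-- The precovering conditions (PC conditions) for a set of arcs of `Z_{2m}`. -/
structure PCcond {m : ℕ} (U : Set (Pt m × Pt m)) : Prop where
  pc1 : ∀ p q : Fin (2 * m), p ≠ q → ∀ x1 x2 : ℕ → ℤ, StrictMono x1 → StrictMono x2 →
    (∀ n, ((p, x1 n), (q, x2 n)) ∈ U) →
    ∃ y1 y2 : ℕ → ℤ, StrictAnti y1 ∧ StrictAnti y2 ∧
      ∀ n, sort2 (cycSucc p, y1 n) (cycSucc q, y2 n) ∈ U
  pc2 : ∀ p q : Fin (2 * m), p ≠ cycSucc q → ∀ x1 x2 : ℕ → ℤ,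
    StrictAnti x1 → StrictMono x2 →
    (∀ n, ((p, x1 n), (q, x2 n)) ∈ U) →
    ∃ y1 y2 : ℕ → ℤ, StrictAnti y1 ∧ StrictAnti y2 ∧
      ∀ n, sort2 (p, y1 n) (cycSucc q, y2 n) ∈ U
  pc2' : ∀ p q : Fin (2 * m), q ≠ cycSucc p → p ≠ q → ∀ x1 x2 : ℕ → ℤ,
    StrictMono x1 → StrictAnti x2 →
    (∀ n, ((p, x1 n), (q, x2 n)) ∈ U) →
    ∃ y1 y2 : ℕ → ℤ, StrictAnti y1 ∧ StrictAnti y2 ∧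
      ∀ n, sort2 (cycSucc p, y1 n) (q, y2 n) ∈ U
  pc3 : ∀ p q : Fin (2 * m), ∀ (x1 : ℤ) (x2 : ℕ → ℤ), StrictMono x2 →
    (∀ n, ((p, x1), (q, x2 n)) ∈ U) →
    ∃ y2 : ℕ → ℤ, StrictAnti y2 ∧ ∀ n, sort2 (p, x1) (cycSucc q, y2 n) ∈ U
  pc3' : ∀ p q : Fin (2 * m), p ≠ q → ∀ (x1 : ℕ → ℤ) (x2 : ℤ), StrictMono x1 →
    (∀ n, ((p, x1 n), (q, x2)) ∈ U) →
    ∃ y1 : ℕ → ℤ, StrictAnti y1 ∧ ∀ n, sort2 (cycSucc p, y1 n) (q, x2) ∈ U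

/-- A point is admissible for the subcategory `A`: its label is unprimed, or it is a
point `(q, n)` of a primed copy with `n ≤ z0`. -/
def memA {m : ℕ} (z0 : ℤ) (a : Pt m) : Prop :=
  a.1.1 % 2 = 1 ∨ (a.1.1 % 2 = 0 ∧ a.2 ≤ z0)

/-- The set of arcs `A` determined by the choice of `z0`. -/
def setA (m : ℕ) (z0 : ℤ) : Set (Pt m × Pt m) :=
  {x | memA z0 x.1 ∧ memA z0 x.2}

/-! ### Decorations

The linearly ordered set `{p} ∪ Z^(p) ∪ {p⁺}` is modelled as `WithBot (WithTop ℤ)`: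
`⊥` is the accumulation point `p`, an integer `n` is the point `n` of `Z^(p)`, and the
top element is the accumulation point `p⁺`. -/

/-- The linearly ordered set `{p} ∪ Z^(p) ∪ {p⁺}`. -/
abbrev Dm := WithBot (WithTop ℤ)

/-- An integer, viewed in `{p} ∪ Z^(p) ∪ {p⁺}`. -/
def toDm (n : ℤ) : Dm := ((n : WithTop ℤ) : Dm)

/-- The element `p⁺` of `{p} ∪ Z^(p) ∪ {p⁺}`. -/
def topDm : Dm := ((⊤ : WithTop ℤ) : Dm)

/-- The unprimed label `p ∈ [m]` with index `i`. -/
def unpr {m : ℕ} (i : Fin m) : Fin (2 * m) := ⟨2 * i.1 + 1, by have := i.2; omega⟩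

/-- The primed label `p' ∈ [m']` with index `i`. -/
def prim {m : ℕ} (i : Fin m) : Fin (2 * m) := ⟨2 * i.1, by have := i.2; omega⟩

/-- Four points of `Fin n` (viewed on a circle with its natural cyclic order) are in
(strict, anticlockwise) cyclic order. -/
def Cyc4 {n : ℕ} (a b c d : Fin n) : Prop :=
  (a < b ∧ b < c ∧ c < d) ∨ (b < c ∧ c < d ∧ d < a) ∨
  (c < d ∧ d < a ∧ a < b) ∨ (d < a ∧ a < b ∧ b < c)

/-- A partition (setoid) of `Fin n` is non-crossing if there are no elements
`i1, j1, i2, j2` in cyclic order with `i1, i2` in one block and `j1, j2` in a different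
block. -/
def IsNoncrossing {n : ℕ} (P : Setoid (Fin n)) : Prop :=
  ∀ i1 j1 i2 j2 : Fin n, Cyc4 i1 j1 i2 j2 → P.r i1 i2 → P.r j1 j2 → P.r i1 j1

/-! ### Alternating non-crossing partitions and the arc sets `U_{(P,X)}` -/

/-- A point of `Z_{2m}` belongs to the interval `[x_{p⁻}, p⁺)` attached to the primed
label `p' ∈ [m']` of index `j`: it lies in the primed copy `Z^(p)`, or in the unprimed
copy `Z^(p⁻)` above the decoration `x_{p⁻}`. -/
def altRegion {m : ℕ} (x : Fin m → Dm) (j : Fin m) (a : Pt m) : Prop :=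
  a.1 = prim j ∨ (a.1 = unpr (cycPred j) ∧ x (cycPred j) ≤ toDm a.2)

/-- The set of arcs `U_{(P,X)}` associated with an alternating non-crossing partition
`(P, X)`: arcs both of whose endpoints lie in `⋃_{p ∈ B} [x_{p⁻}, p⁺)` for a single
block `B` of `P`. -/
def altU {m : ℕ} (P : Setoid (Fin m)) (x : Fin m → Dm) : Set (Pt m × Pt m) :=
  {a | IsArc a ∧ ∃ b : Fin m,
    (∃ j, P.r b j ∧ altRegion x j a.1) ∧ (∃ j, P.r b j ∧ altRegion x j a.2)}

end PY

namespace PY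

/-- The shift `Σⁿ` on arcs: it subtracts `n` from both integer coordinates and keeps the
labels. -/
def shiftArc {m : ℕ} (n : ℤ) (a : Pt m × Pt m) : Pt m × Pt m :=
  ((a.1.1, a.1.2 - n), (a.2.1, a.2.2 - n))

/-- An arc of `Z_{2m}` belongs to `D`: both endpoints lie in one primed copy. -/
def memD {m : ℕ} (a : Pt m × Pt m) : Prop :=
  a.1.1 = a.2.1 ∧ a.1.1.1 % 2 = 0

end PY

/-!
STATEMENT 17: Let (P, X) be an alternating non-crossing partition of [m'] ∪ [m]. Then
⋂_{n ∈ ℤ} Σⁿ U_{(P,X)} = D (that is, an arc a satisfies Σⁿ a ∈ U_{(P,X)} for all n ∈ ℤ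
exactly when both endpoints of a lie in one primed copy) if and only if every block of P
is a singleton and x_p ≠ p for every p ∈ [m].
-/


namespace PY

lemma prim_ne_unpr' {m : ℕ} (i j : Fin m) : prim i ≠ unpr j := by
  simp only [prim, unpr, Fin.ext_iff, ne_eq]; omega

lemma prim_inj' {m : ℕ} {i j : Fin m} (h : prim i = prim j) : i = j := by
  simp only [prim, Fin.ext_iff] at h ⊢; omega

lemma unpr_inj' {m : ℕ} {i j : Fin m} (h : unpr i = unpr j) : i = j := by
  simp only [unpr, Fin.ext_iff] at h ⊢; omega

lemma cycPred_cycSucc' {m : ℕ} (p : Fin m) : cycPred (cycSucc p) = p := by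
  have hm := p.pos
  simp only [cycPred, cycSucc, Fin.ext_iff]
  rw [Nat.mod_add_mod]
  have h : p.1 + 1 + (m - 1) = p.1 + m := by omega
  rw [h, Nat.add_mod_right, Nat.mod_eq_of_lt p.2]

lemma dm_eq_bot' {d : Dm} (h : ∀ w : ℤ, d ≤ toDm w) : d = ⊥ := by
  induction d using WithBot.recBotCoe with
  | bot => rfl
  | coe t =>
    induction t using WithTop.recTopCoe with
    | top =>
      have h1 := h 0
      rw [toDm, WithBot.coe_le_coe] at h1
      exact absurd h1 (by simp)
    | coe k =>
      have h1 := h (k - 1)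
      rw [toDm, WithBot.coe_le_coe, WithTop.coe_le_coe] at h1
      omega

lemma isArc_shift' {m : ℕ} {a : Pt m × Pt m} (h : IsArc a) (n : ℤ) :
    IsArc (shiftArc n a) := by
  obtain ⟨h1, h2⟩ := h
  refine ⟨?_, ?_⟩ <;> simp only [shiftArc, ptLt] at h1 h2 ⊢
  · rcases h1 with h | ⟨h, h'⟩
    · exact Or.inl h
    · exact Or.inr ⟨h, by omega⟩
  · intro he
    have := h2 he
    omega

end PY

open PY in
theorem inter_shifts_altU_eq_D_iff
    (m : ℕ) (hm : 0 < m)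
    (P : Setoid (Fin m)) (x : Fin m → Dm) (hP : IsNoncrossing P) :
    (∀ a : Pt m × Pt m, IsArc a →
        ((∀ n : ℤ, shiftArc n a ∈ altU P x) ↔ memD a)) ↔
      ((∀ i j : Fin m, P.r i j → i = j) ∧ ∀ i : Fin m, x i ≠ (⊥ : Dm)) := by
  constructor
  · intro H
    constructor
    · -- every block is a singleton
      intro i j hij
      by_contra hne
      have hpij : prim i ≠ prim j := fun h => hne (prim_inj' h)
      have main : ∀ p q : Fin m, P.r p q → prim p < prim q → False := by
        intro p q hpq hlt
        set a : Pt m × Pt m := ((prim p, 0), (prim q, 0)) with ha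
        have harc : IsArc a := ⟨Or.inl hlt, fun h => absurd h (Fin.ne_of_lt hlt)⟩
        have hmem : ∀ n : ℤ, shiftArc n a ∈ altU P x := by
          intro n
          exact ⟨isArc_shift' harc n, p, ⟨p, P.refl p, Or.inl rfl⟩,
            ⟨q, hpq, Or.inl rfl⟩⟩
        have hd := (H a harc).mp hmem
        exact absurd hd.1 (Fin.ne_of_lt hlt)
      rcases lt_or_gt_of_ne hpij with hlt | hlt
      · exact main i j hij hlt
      · exact main j i (P.symm hij) hlt
    · -- x i ≠ ⊥
      intro p hbot
      set a : Pt m × Pt m := ((unpr p, 0), (unpr p, 2)) with ha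
      have harc : IsArc a := ⟨Or.inr ⟨rfl, by norm_num⟩, fun _ => by norm_num⟩
      have hmem : ∀ n : ℤ, shiftArc n a ∈ altU P x := by
        intro n
        refine ⟨isArc_shift' harc n, cycSucc p,
          ⟨cycSucc p, P.refl _, Or.inr ⟨by rw [cycPred_cycSucc']; rfl, ?_⟩⟩,
          ⟨cycSucc p, P.refl _, Or.inr ⟨by rw [cycPred_cycSucc']; rfl, ?_⟩⟩⟩ <;>
        · rw [cycPred_cycSucc', hbot]; exact bot_le
      have hd := (H a harc).mp hmem
      have : (unpr p).1 % 2 = 0 := hd.2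
      simp only [unpr] at this
      omega
  · rintro ⟨hsing, hbot⟩ a ha
    constructor
    · intro h
      have key : ∀ n : ℤ, ∃ j : Fin m,
          altRegion x j (a.1.1, a.1.2 - n) ∧ altRegion x j (a.2.1, a.2.2 - n) := by
        intro n
        obtain ⟨_, b, ⟨j1, hbj1, hr1⟩, ⟨j2, hbj2, hr2⟩⟩ := h n
        have e1 := hsing _ _ hbj1
        have e2 := hsing _ _ hbj2
        exact ⟨j1, hr1, (e1 ▸ e2 : j1 = j2) ▸ hr2⟩
      have odd1 : ∀ q : Fin m, a.1.1 = unpr q → False := by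
        intro q hq
        have hle : ∀ w : ℤ, x q ≤ toDm w := by
          intro w
          obtain ⟨j, h1, _⟩ := key (a.1.2 - w)
          rcases h1 with hpr | ⟨heq, hle⟩
          · exact absurd (hpr.symm.trans hq) (prim_ne_unpr' j q)
          · have : q = cycPred j := unpr_inj' (hq ▸ heq)
            rw [this]
            simpa using hle
        exact hbot q (dm_eq_bot' hle)
      have odd2 : ∀ q : Fin m, a.2.1 = unpr q → False := by
        intro q hq
        have hle : ∀ w : ℤ, x q ≤ toDm w := by
          intro w
          obtain ⟨j, _, h2⟩ := key (a.2.2 - w)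
          rcases h2 with hpr | ⟨heq, hle⟩
          · exact absurd (hpr.symm.trans hq) (prim_ne_unpr' j q)
          · have : q = cycPred j := unpr_inj' (hq ▸ heq)
            rw [this]
            simpa using hle
        exact hbot q (dm_eq_bot' hle)
      obtain ⟨j, h1, h2⟩ := key 0
      have e1 : a.1.1 = prim j := by
        rcases h1 with h | ⟨h, _⟩
        · exact h
        · exact absurd h (fun hh => odd1 _ hh)
      have e2 : a.2.1 = prim j := by
        rcases h2 with h | ⟨h, _⟩
        · exact h
        · exact absurd h (fun hh => odd2 _ hh)
      refine ⟨e1.trans e2.symm, ?_⟩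
      rw [e1]
      simp only [prim]
      omega
    · rintro ⟨heq, hev⟩ n
      have hj : a.1.1.1 / 2 < m := by have := a.1.1.2; omega
      set j : Fin m := ⟨a.1.1.1 / 2, hj⟩ with hjdef
      have hpj : a.1.1 = prim j := by
        simp only [prim, Fin.ext_iff, hjdef]
        omega
      exact ⟨isArc_shift' ha n, j, ⟨j, P.refl _, Or.inl hpj⟩,
        ⟨j, P.refl _, Or.inl (heq ▸ hpj)⟩⟩
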